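/- Let P be a signed poset on [n]. The set of integer points of the signed chain polytope C_P is exactly the set of antichains of P, where a ∈ {-1,0,1}^n is an antichain if for every α ∈ P of the form ±e_i ± e_j or ±e_i ∓ e_j (i ≠ j), either ⟨α, a⟩ ≠ 0 or a_i = a_j = 0. -/

import Mathlib

/-!
An integer point `a` of `C_P` has `|a_i| ≤ 1` by the one-element chains, and if
`α = σ e_i - τ e_j ∈ P` with `⟨α, a⟩ = 0`, the two-element chain through `α` evaluates to `±2 a_i`,
forcing `a_i = a_j = 0`.

Conversely, along a chain the relations are, up to one global sign `ε`, the differences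
`σ_k e_{c_k} - σ_{k+1} e_{c_{k+1}}` of consecutive signed vertices, where `σ_k = ε s_0 ⋯ s_{k-1}`.
Hence for `k < j` the difference `σ_k e_{c_k} - σ_j e_{c_j}` is a nonempty sum of elements of `P`:
antisymmetry makes it nonzero, and when `c_k ≠ c_j` it lies in `B_n`, hence in `P`. The antichain
condition then shows that the nonzero terms `σ_k a_{c_k}` of the chain functional are pairwise
distinct, so at most one `1` and one `-1` occur and the functional lies in `[-1, 1]`.
-/

open Finset Pointwise

noncomputable section
attribute [local instance] Classical.propDecidable

/-- The `i`-th standard unit vector in `ℝ^n`. -/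
def ee (n : ℕ) (i : Fin n) : Fin n → ℝ := fun j => if j = i then 1 else 0

/-- Standard inner product on `ℝ^n`. -/
def dot {n : ℕ} (a x : Fin n → ℝ) : ℝ := ∑ i, a i * x i

/-- The type-B root system `B_n`. -/
def Bn (n : ℕ) : Set (Fin n → ℝ) :=
  {α | (∃ i : Fin n, α = ee n i ∨ α = -ee n i) ∨
       (∃ i j : Fin n, i < j ∧ (α = ee n i + ee n j ∨ α = -ee n i - ee n j ∨
          α = ee n i - ee n j ∨ α = -ee n i + ee n j))}

/-- The set of positive linear combinations of elements of `S`. -/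
def PLC {n : ℕ} (S : Set (Fin n → ℝ)) : Set (Fin n → ℝ) :=
  {β | ∃ (m : ℕ) (c : Fin m → ℝ) (v : Fin m → (Fin n → ℝ)),
     (∀ k, 0 < c k) ∧ (∀ k, v k ∈ S) ∧ β = ∑ k, c k • v k}

/-- A signed poset on `[n]`: a subset of `B_n` with antisymmetry, closed under
positive linear combinations within `B_n`. -/
def IsSignedPoset {n : ℕ} (P : Set (Fin n → ℝ)) : Prop :=
  P ⊆ Bn n ∧ (∀ α ∈ P, -α ∉ P) ∧ (∀ β ∈ Bn n, β ∈ PLC P → β ∈ P)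

/-- The signed order cone `K_P`. -/
def orderCone {n : ℕ} (P : Set (Fin n → ℝ)) : Set (Fin n → ℝ) :=
  {x | ∀ α ∈ P, 0 ≤ dot α x}

/-- The signed order polytope `O_P = K_P ∩ [-1,1]^n`. -/
def orderPolytope {n : ℕ} (P : Set (Fin n → ℝ)) : Set (Fin n → ℝ) :=
  {x | (∀ α ∈ P, 0 ≤ dot α x) ∧ ∀ i, -1 ≤ x i ∧ x i ≤ 1}

/-- `(c, s)` is a chain of the signed poset `P`, consisting of `m + 1` elements
`c 0, ..., c m` of `[n]` and signs `s 0, ..., s (m-1)`. -/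
def IsSChain {n : ℕ} (P : Set (Fin n → ℝ)) (m : ℕ) (c : Fin (m + 1) → Fin n)
    (s : Fin m → ℝ) : Prop :=
  (∀ i, s i = 1 ∨ s i = -1) ∧
  ∃ α : Fin m → (Fin n → ℝ),
    (∀ i : Fin m, α i ∈ P ∧
      ((s i = 1 ∧ (α i = ee n (c i.castSucc) - ee n (c i.succ) ∨
                    α i = -(ee n (c i.castSucc) - ee n (c i.succ)))) ∨
       (s i = -1 ∧ (α i = ee n (c i.castSucc) + ee n (c i.succ) ∨
                    α i = -(ee n (c i.castSucc) + ee n (c i.succ)))))) ∧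
    (∀ i : Fin m, ∀ h : (i : ℕ) + 1 < m, α i + α ⟨(i : ℕ) + 1, h⟩ ∈ P)

/-- The linear functional `x_{c_1} + s_1 x_{c_2} + s_1 s_2 x_{c_3} + ⋯` of a chain. -/
def chainFun {n m : ℕ} (c : Fin (m + 1) → Fin n) (s : Fin m → ℝ) (x : Fin n → ℝ) : ℝ :=
  ∑ k : Fin (m + 1),
    (∏ l ∈ Finset.univ.filter (fun l : Fin m => (l : ℕ) < (k : ℕ)), s l) * x (c k)

/-- The signed chain polytope `C_P`. -/
def chainPolytope {n : ℕ} (P : Set (Fin n → ℝ)) : Set (Fin n → ℝ) :=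
  {x | ∀ (m : ℕ) (c : Fin (m + 1) → Fin n) (s : Fin m → ℝ), IsSChain P m c s →
        -1 ≤ chainFun c s x ∧ chainFun c s x ≤ 1}

/-- `a ∈ {-1,0,1}^n` is an antichain of `P`: for every `α ∈ P` of the form
`±e_i ± e_j` (`i ≠ j`), either `⟨α, a⟩ ≠ 0` or `a_i = a_j = 0`. -/
def IsSAntichain {n : ℕ} (P : Set (Fin n → ℝ)) (a : Fin n → ℤ) : Prop :=
  (∀ i, a i = -1 ∨ a i = 0 ∨ a i = 1) ∧
  ∀ i j : Fin n, i ≠ j → ∀ α ∈ P,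
    (α = ee n i + ee n j ∨ α = -ee n i - ee n j ∨
     α = ee n i - ee n j ∨ α = -ee n i + ee n j) →
    (dot α (fun l => (a l : ℝ)) ≠ 0 ∨ (a i = 0 ∧ a j = 0))

lemma mul_eq_one_or_neg_one {σ τ : ℝ} (hσ : σ = 1 ∨ σ = -1) (hτ : τ = 1 ∨ τ = -1) :
    σ * τ = 1 ∨ σ * τ = -1 := by
  rcases hσ with rfl | rfl <;> rcases hτ with rfl | rfl <;> norm_num

lemma neg_eq_one_or_neg_one {σ : ℝ} (hσ : σ = 1 ∨ σ = -1) : -σ = 1 ∨ -σ = -1 := by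
  rcases hσ with rfl | rfl <;> norm_num

section Roots

variable {n : ℕ}

lemma dot_smul_ee_sub_smul_ee (i j : Fin n) (σ τ : ℝ) (x : Fin n → ℝ) :
    dot (σ • ee n i - τ • ee n j) x = σ * x i - τ * x j := by
  simp [dot, ee, sub_mul, Finset.sum_sub_distrib, ite_mul]

lemma pm_ee_pm_ee_iff {i j : Fin n} {α : Fin n → ℝ} :
    (α = ee n i + ee n j ∨ α = -ee n i - ee n j ∨ α = ee n i - ee n j ∨ α = -ee n i + ee n j) ↔
      ∃ σ τ : ℝ, (σ = 1 ∨ σ = -1) ∧ (τ = 1 ∨ τ = -1) ∧ α = σ • ee n i - τ • ee n j := by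
  constructor
  · rintro (rfl | rfl | rfl | rfl)
    · exact ⟨1, -1, by norm_num, by norm_num, by module⟩
    · exact ⟨-1, 1, by norm_num, by norm_num, by module⟩
    · exact ⟨1, 1, by norm_num, by norm_num, by module⟩
    · exact ⟨-1, -1, by norm_num, by norm_num, by module⟩
  · rintro ⟨σ, τ, hσ | hσ, hτ | hτ, rfl⟩ <;> subst σ τ
    · exact Or.inr (Or.inr (Or.inl (by module)))
    · exact Or.inl (by module)
    · exact Or.inr (Or.inl (by module))
    · exact Or.inr (Or.inr (Or.inr (by module)))

lemma smul_ee_sub_smul_ee_mem_Bn {i j : Fin n} (hij : i ≠ j) {σ τ : ℝ}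
    (hσ : σ = 1 ∨ σ = -1) (hτ : τ = 1 ∨ τ = -1) : σ • ee n i - τ • ee n j ∈ Bn n := by
  rcases lt_or_gt_of_ne hij with h | h
  · exact Or.inr ⟨i, j, h, pm_ee_pm_ee_iff.2 ⟨σ, τ, hσ, hτ, rfl⟩⟩
  · refine Or.inr ⟨j, i, h, pm_ee_pm_ee_iff.2 ⟨-τ, -σ, neg_eq_one_or_neg_one hτ,
      neg_eq_one_or_neg_one hσ, by module⟩⟩

lemma neg_mem_Bn {β : Fin n → ℝ} (hβ : β ∈ Bn n) : -β ∈ Bn n := by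
  rcases hβ with ⟨i, rfl | rfl⟩ | ⟨i, j, hij, h⟩
  · exact Or.inl ⟨i, Or.inr rfl⟩
  · exact Or.inl ⟨i, Or.inl (neg_neg _)⟩
  · obtain ⟨σ, τ, hσ, hτ, rfl⟩ := pm_ee_pm_ee_iff.1 h
    exact Or.inr ⟨i, j, hij, pm_ee_pm_ee_iff.2 ⟨-σ, -τ, neg_eq_one_or_neg_one hσ,
      neg_eq_one_or_neg_one hτ, by module⟩⟩

lemma Bn_apply {β : Fin n → ℝ} (hβ : β ∈ Bn n) (l : Fin n) :
    β l = -1 ∨ β l = 0 ∨ β l = 1 := by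
  rcases hβ with ⟨i, h | h⟩ | ⟨i, j, hij, h | h | h | h⟩ <;> subst h <;>
    simp only [ee, Pi.add_apply, Pi.sub_apply, Pi.neg_apply] <;> split_ifs <;> norm_num <;> omega

lemma Bn_ne_zero {β : Fin n → ℝ} (hβ : β ∈ Bn n) : β ≠ 0 := by
  rintro rfl
  rcases hβ with ⟨i, h | h⟩ | ⟨i, j, hij, h⟩
  · simpa [ee] using congrFun h i
  · simpa [ee] using congrFun h i
  · obtain ⟨σ, τ, hσ, -, h⟩ := pm_ee_pm_ee_iff.1 h
    have := congrFun h i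
    simp only [Pi.zero_apply, Pi.sub_apply, Pi.smul_apply, ee, ↓reduceIte, smul_eq_mul, mul_one,
      hij.ne, mul_zero, sub_zero] at this
    rcases hσ with rfl | rfl <;> norm_num at this

lemma ne_of_smul_ee_sub_smul_ee_mem_Bn {i j : Fin n} {σ τ : ℝ}
    (hσ : σ = 1 ∨ σ = -1) (hτ : τ = 1 ∨ τ = -1) (h : σ • ee n i - τ • ee n j ∈ Bn n) : i ≠ j := by
  rintro rfl
  have hval := Bn_apply h i
  have hne := Bn_ne_zero h
  simp only [Pi.sub_apply, Pi.smul_apply, ee, smul_eq_mul] at hval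
  rcases hσ with rfl | rfl <;> rcases hτ with rfl | rfl <;> norm_num at hval
  all_goals exact hne (by simp)

end Roots

section PositiveCombinations

variable {n : ℕ} {S : Set (Fin n → ℝ)}

lemma zero_mem_PLC : (0 : Fin n → ℝ) ∈ PLC S :=
  ⟨0, Fin.elim0, Fin.elim0, fun k => k.elim0, fun k => k.elim0, by simp⟩

lemma mem_PLC_of_mem {β : Fin n → ℝ} (hβ : β ∈ S) : β ∈ PLC S :=
  ⟨1, fun _ => 1, fun _ => β, fun _ => one_pos, fun _ => hβ, by simp⟩

lemma add_mem_PLC {β γ : Fin n → ℝ} (hβ : β ∈ PLC S) (hγ : γ ∈ PLC S) : β + γ ∈ PLC S := by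
  obtain ⟨p, a, v, ha, hv, rfl⟩ := hβ
  obtain ⟨q, b, w, hb, hw, rfl⟩ := hγ
  refine ⟨p + q, Fin.append a b, Fin.append v w, Fin.addCases (by simpa using ha)
    (by simpa using hb), Fin.addCases (by simpa using hv) (by simpa using hw), ?_⟩
  simp [Fin.sum_univ_add]

lemma sub_mem_PLC_of_le {m : ℕ} (u : Fin (m + 1) → Fin n → ℝ)
    (hu : ∀ i : Fin m, u i.castSucc - u i.succ ∈ S) {k j : Fin (m + 1)} (hkj : k ≤ j) :
    u k - u j ∈ PLC S := by
  induction j using Fin.induction with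
  | zero => simp [nonpos_iff_eq_zero.1 hkj, zero_mem_PLC]
  | succ i ih =>
    rcases hkj.eq_or_lt with rfl | hlt
    · simpa using zero_mem_PLC
    · rw [← sub_add_sub_cancel (u k) (u i.castSucc)]
      exact add_mem_PLC (ih (Fin.le_castSucc_iff.2 hlt)) (mem_PLC_of_mem (hu i))

end PositiveCombinations

namespace IsSignedPoset

variable {n : ℕ} {P : Set (Fin n → ℝ)}

lemma add_ne_zero (hP : IsSignedPoset P) {α β : Fin n → ℝ} (hα : α ∈ P) (hβ : β ∈ PLC P) :
    α + β ≠ 0 := by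
  intro h
  have hneg : -α ∈ P := hP.2.2 _ (neg_mem_Bn (hP.1 hα)) (neg_eq_of_add_eq_zero_right h ▸ hβ)
  exact hP.2.1 α hα hneg

lemma sub_ne_zero_of_lt (hP : IsSignedPoset P) {m : ℕ} (u : Fin (m + 1) → Fin n → ℝ)
    (hu : ∀ i : Fin m, u i.castSucc - u i.succ ∈ P) {k j : Fin (m + 1)} (hkj : k < j) :
    u k - u j ≠ 0 := by
  obtain ⟨i, rfl⟩ := Fin.exists_castSucc_eq.2 (Fin.ne_last_of_lt hkj)
  rw [← sub_add_sub_cancel (u i.castSucc) (u i.succ)]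
  exact hP.add_ne_zero (hu i) (sub_mem_PLC_of_le u hu (Fin.castSucc_lt_iff_succ_le.1 hkj))

end IsSignedPoset

lemma abs_sum_le_one_of_pairwise {ι : Type*} [Fintype ι] [LinearOrder ι] (b : ι → ℝ)
    (hb : ∀ k, b k = -1 ∨ b k = 0 ∨ b k = 1) (hpair : ∀ k j, k < j → b k = b j → b k = 0) :
    |∑ k, b k| ≤ 1 := by
  have hcard : ∀ v : ℝ, v ≠ 0 → #{k | b k = v} ≤ 1 := by
    intro v hv
    refine Finset.card_le_one.2 fun k hk j hj => ?_
    simp only [Finset.mem_filter, Finset.mem_univ, true_and] at hk hj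
    by_contra hkj
    rcases lt_or_gt_of_ne hkj with h | h
    · exact hv (hk ▸ hpair k j h (hk.trans hj.symm))
    · exact hv (hj ▸ hpair j k h (hj.trans hk.symm))
  have hsum : ∑ k, b k = (#{k | b k = 1} : ℝ) - #{k | b k = -1} := by
    rw [← Finset.sum_boole, ← Finset.sum_boole, ← Finset.sum_sub_distrib]
    refine Finset.sum_congr rfl fun k _ => ?_
    rcases hb k with h | h | h <;> norm_num [h]
  have h1 : (#{k | b k = 1} : ℝ) ≤ 1 := by exact_mod_cast hcard 1 one_ne_zero
  have h2 : (#{k | b k = -1} : ℝ) ≤ 1 := by exact_mod_cast hcard (-1) (by norm_num)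
  rw [hsum, abs_le]
  constructor <;> linarith [(#{k | b k = 1}).cast_nonneg (α := ℝ),
    (#{k | b k = -1}).cast_nonneg (α := ℝ)]

namespace IsSAntichain

variable {n m : ℕ} {P : Set (Fin n → ℝ)} {a : Fin n → ℤ} {σ : Fin (m + 1) → ℝ}
  {c : Fin (m + 1) → Fin n}

lemma eq_zero_of_eq (hP : IsSignedPoset P) (ha : IsSAntichain P a)
    (hσ : ∀ k, σ k = 1 ∨ σ k = -1)
    (hstep : ∀ i : Fin m, σ i.castSucc • ee n (c i.castSucc) - σ i.succ • ee n (c i.succ) ∈ P)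
    {k j : Fin (m + 1)} (hkj : k < j) (heq : σ k * a (c k) = σ j * a (c j)) :
    σ k * a (c k) = 0 := by
  set w : Fin (m + 1) → Fin n → ℝ := fun k => σ k • ee n (c k)
  have hne : w k - w j ≠ 0 := hP.sub_ne_zero_of_lt w hstep hkj
  by_cases hc : c k = c j
  · have hσkj : σ j = -σ k := by
      rcases hσ k with hk | hk <;> rcases hσ j with hj | hj <;> rw [hj, hk] <;> norm_num
      all_goals exact absurd (by simp [w, hc, hk, hj]) hne
    rw [hσkj, hc] at heq
    rw [hc]
    linarith
  · have hw : w k - w j ∈ P := hP.2.2 _ (smul_ee_sub_smul_ee_mem_Bn hc (hσ k) (hσ j))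
      (sub_mem_PLC_of_le w hstep hkj.le)
    rcases ha.2 (c k) (c j) hc _ hw (pm_ee_pm_ee_iff.2 ⟨σ k, σ j, hσ k, hσ j, rfl⟩) with
      hdot | ⟨h0, -⟩
    · rw [dot_smul_ee_sub_smul_ee, heq, sub_self] at hdot
      exact absurd rfl hdot
    · simp [h0]

lemma abs_sum_le_one (hP : IsSignedPoset P) (ha : IsSAntichain P a)
    (hσ : ∀ k, σ k = 1 ∨ σ k = -1)
    (hstep : ∀ i : Fin m, σ i.castSucc • ee n (c i.castSucc) - σ i.succ • ee n (c i.succ) ∈ P) :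
    |∑ k, σ k * a (c k)| ≤ 1 := by
  refine abs_sum_le_one_of_pairwise _ (fun k => ?_) fun k j => ha.eq_zero_of_eq hP hσ hstep
  rcases hσ k with h | h <;> rcases ha.1 (c k) with h' | h' | h' <;> simp [h, h']

end IsSAntichain

section Chains

variable {n m : ℕ}

def chainSign (s : Fin m → ℝ) (k : Fin (m + 1)) : ℝ :=
  ∏ l ∈ Finset.univ.filter (fun l : Fin m => (l : ℕ) < (k : ℕ)), s l

lemma chainFun_eq_sum_chainSign (c : Fin (m + 1) → Fin n) (s : Fin m → ℝ) (x : Fin n → ℝ) :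
    chainFun c s x = ∑ k, chainSign s k * x (c k) := rfl

lemma chainSign_zero (s : Fin m → ℝ) : chainSign s 0 = 1 := by
  simp [chainSign]

lemma chainSign_succ (s : Fin m → ℝ) (i : Fin m) :
    chainSign s i.succ = chainSign s i.castSucc * s i := by
  have hins : Finset.univ.filter (fun l : Fin m => (l : ℕ) < (i.succ : ℕ)) =
      insert i (Finset.univ.filter (fun l : Fin m => (l : ℕ) < (i.castSucc : ℕ))) := by
    ext l
    simp only [Finset.mem_filter, Finset.mem_univ, true_and, Finset.mem_insert, Fin.val_succ,
      Fin.val_castSucc, Fin.ext_iff]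
    omega
  rw [chainSign, hins, Finset.prod_insert (by simp), mul_comm]
  rfl

lemma chainSign_eq_one_or_neg_one {s : Fin m → ℝ} (hs : ∀ i, s i = 1 ∨ s i = -1)
    (k : Fin (m + 1)) : chainSign s k = 1 ∨ chainSign s k = -1 :=
  Finset.prod_induction s (fun r => r = 1 ∨ r = -1) (fun _ _ => mul_eq_one_or_neg_one)
    (Or.inl rfl) fun i _ => hs i

lemma chainFun_zero (c : Fin 1 → Fin n) (s : Fin 0 → ℝ) (x : Fin n → ℝ) :
    chainFun c s x = x (c 0) := by
  simp [chainFun_eq_sum_chainSign, chainSign_zero]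

lemma chainFun_one (c : Fin 2 → Fin n) (s : Fin 1 → ℝ) (x : Fin n → ℝ) :
    chainFun c s x = x (c 0) + s 0 * x (c 1) := by
  rw [chainFun_eq_sum_chainSign, Fin.sum_univ_two, chainSign_zero, ← Fin.succ_zero_eq_one,
    chainSign_succ, Fin.castSucc_zero, chainSign_zero, one_mul, one_mul]

end Chains

lemma exists_sign_of_chain_step {n : ℕ} {i j : Fin n} {s t : ℝ} {α : Fin n → ℝ}
    (ht : t = 1 ∨ t = -1)
    (h : (s = 1 ∧ (α = ee n i - ee n j ∨ α = -(ee n i - ee n j))) ∨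
      (s = -1 ∧ (α = ee n i + ee n j ∨ α = -(ee n i + ee n j)))) :
    ∃ ρ : ℝ, (ρ = 1 ∨ ρ = -1) ∧ α = ρ • (t • ee n i - (t * s) • ee n j) := by
  rcases ht with rfl | rfl <;> rcases h with ⟨rfl, rfl | rfl⟩ | ⟨rfl, rfl | rfl⟩
  all_goals first
    | exact ⟨1, Or.inl rfl, by module⟩
    | exact ⟨-1, Or.inr rfl, by module⟩

/-- Two consecutive steps of a chain through a middle vertex `y` are equally oriented, since
otherwise their sum would have a coordinate `±2`. -/
lemma eq_of_smul_sub_add_smul_sub_mem_Bn {n : ℕ} {x y z : Fin n → ℝ} {q : Fin n} {ρ ρ' : ℝ}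
    (hρ : ρ = 1 ∨ ρ = -1) (hρ' : ρ' = 1 ∨ ρ' = -1)
    (hx : x q = 0) (hy : y q = 1 ∨ y q = -1) (hz : z q = 0)
    (h : ρ • (x - y) + ρ' • (y - z) ∈ Bn n) : ρ = ρ' := by
  have hq := Bn_apply h q
  simp only [Pi.add_apply, Pi.smul_apply, Pi.sub_apply, smul_eq_mul, hx, hz] at hq
  rcases hρ with rfl | rfl <;> rcases hρ' with rfl | rfl
  all_goals first | rfl | rcases hy with hy | hy <;> norm_num [hy] at hq

lemma IsSChain.exists_sign {n m : ℕ} {P : Set (Fin n → ℝ)} {c : Fin (m + 1) → Fin n}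
    {s : Fin m → ℝ} (hPB : P ⊆ Bn n) (h : IsSChain P m c s) :
    ∃ ε : ℝ, (ε = 1 ∨ ε = -1) ∧ ∀ i : Fin m,
      (ε * chainSign s i.castSucc) • ee n (c i.castSucc) -
        (ε * chainSign s i.succ) • ee n (c i.succ) ∈ P := by
  obtain ⟨hs, α, hα, hadj⟩ := h
  have hT := chainSign_eq_one_or_neg_one hs
  set u : Fin (m + 1) → Fin n → ℝ := fun k => chainSign s k • ee n (c k)
  have hform : ∀ i, ∃ ρ : ℝ, (ρ = 1 ∨ ρ = -1) ∧ α i = ρ • (u i.castSucc - u i.succ) := by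
    intro i
    obtain ⟨ρ, hρ, hαi⟩ := exists_sign_of_chain_step (hT i.castSucc) (hα i).2
    exact ⟨ρ, hρ, by simp only [hαi, u, chainSign_succ]⟩
  choose ρ hρ hαρ using hform
  suffices hρε : ∃ ε : ℝ, (ε = 1 ∨ ε = -1) ∧ ∀ i, ρ i = ε by
    obtain ⟨ε, hε, hρε⟩ := hρε
    refine ⟨ε, hε, fun i => ?_⟩
    convert (hα i).1 using 1
    rw [hαρ, hρε]
    module
  have hne : ∀ i : Fin m, c i.castSucc ≠ c i.succ := by
    intro i
    refine ne_of_smul_ee_sub_smul_ee_mem_Bn (mul_eq_one_or_neg_one (hρ i) (hT i.castSucc))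
      (mul_eq_one_or_neg_one (hρ i) (hT i.succ)) ?_
    convert hPB (hα i).1 using 1
    rw [hαρ]
    module
  rcases m with _ | m
  · exact ⟨1, Or.inl rfl, fun i => i.elim0⟩
  have hconst : ∀ i : Fin m, ρ i.succ = ρ i.castSucc := by
    intro i
    have hB : α i.castSucc + α i.succ ∈ Bn n := hPB (hadj i.castSucc (by simp))
    have hprev := hne i.castSucc
    rw [hαρ, hαρ, Fin.succ_castSucc] at hB
    rw [Fin.succ_castSucc] at hprev
    refine (eq_of_smul_sub_add_smul_sub_mem_Bn (q := c i.succ.castSucc) (hρ _) (hρ _)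
      ?_ ?_ ?_ hB).symm
    · simp only [u, Pi.smul_apply, ee, if_neg hprev.symm, smul_zero]
    · simpa [u, ee] using hT _
    · simp only [u, Pi.smul_apply, ee, if_neg (hne i.succ), smul_zero]
  exact ⟨ρ 0, hρ 0, fun i => Fin.induction rfl (fun i ih => (hconst i).trans ih) i⟩

section TwoElementChains

variable {n : ℕ} {P : Set (Fin n → ℝ)}

lemma isSChain_single (i : Fin n) : IsSChain P 0 (fun _ => i) Fin.elim0 :=
  ⟨fun k => k.elim0, Fin.elim0, fun k => k.elim0, fun k => k.elim0⟩

lemma isSChain_pair {i j : Fin n} {σ τ : ℝ} (hσ : σ = 1 ∨ σ = -1) (hτ : τ = 1 ∨ τ = -1)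
    (hα : σ • ee n i - τ • ee n j ∈ P) : IsSChain P 1 ![i, j] ![σ * τ] := by
  refine ⟨fun _ => by simpa using mul_eq_one_or_neg_one hσ hτ, fun _ => σ • ee n i - τ • ee n j,
    fun k => ⟨hα, ?_⟩, fun k hk => absurd hk (by omega)⟩
  obtain rfl : k = 0 := Subsingleton.elim k 0
  rcases hσ with rfl | rfl <;> rcases hτ with rfl | rfl <;> norm_num
  all_goals right; abel

end TwoElementChains

section Main

variable {n : ℕ} {P : Set (Fin n → ℝ)} {a : Fin n → ℤ}

lemma isSAntichain_of_mem_chainPolytope (h : (fun i => (a i : ℝ)) ∈ chainPolytope P) :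
    IsSAntichain P a := by
  have hbound : ∀ i, -1 ≤ a i ∧ a i ≤ 1 := fun i => by
    have hi := h 0 (fun _ => i) Fin.elim0 (isSChain_single i)
    rw [chainFun_zero] at hi
    exact_mod_cast hi
  refine ⟨fun i => by have := hbound i; omega, fun i j _ α hα hform => ?_⟩
  obtain ⟨σ, τ, hσ, hτ, rfl⟩ := pm_ee_pm_ee_iff.1 hform
  have hij' := h 1 ![i, j] ![σ * τ] (isSChain_pair hσ hτ hα)
  rw [chainFun_one] at hij'
  rw [dot_smul_ee_sub_smul_ee, or_iff_not_imp_left, not_not]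
  intro hdot
  rcases hσ with rfl | rfl <;> rcases hτ with rfl | rfl <;>
    simp only [Matrix.cons_val_zero, Matrix.cons_val_one] at hij' <;>
    norm_num at hij' hdot
  all_goals norm_cast at hij' hdot; omega

lemma mem_chainPolytope_of_isSAntichain (hP : IsSignedPoset P) (ha : IsSAntichain P a) :
    (fun i => (a i : ℝ)) ∈ chainPolytope P := by
  intro m c s hc
  obtain ⟨ε, hε, hstep⟩ := hc.exists_sign hP.1
  have hsum := ha.abs_sum_le_one hP (fun k => mul_eq_one_or_neg_one hε
    (chainSign_eq_one_or_neg_one hc.1 k)) hstep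
  have hεε : ε * ε = 1 := by rcases hε with rfl | rfl <;> norm_num
  have hfun : chainFun c s (fun i => (a i : ℝ)) = ε * ∑ k, ε * chainSign s k * a (c k) := by
    simp only [chainFun_eq_sum_chainSign, Finset.mul_sum, ← mul_assoc, hεε, one_mul]
  rw [← abs_le, hfun, abs_mul]
  rcases hε with rfl | rfl <;> simpa using hsum

end Main

/-- the integer points of the signed chain polytope `C_P` are exactly
the antichains of `P`. -/
theorem stmt18 {n : ℕ} (P : Set (Fin n → ℝ)) (hP : IsSignedPoset P) :
    ∀ a : Fin n → ℤ,
      ((fun i => (a i : ℝ)) ∈ chainPolytope P) ↔ IsSAntichain P a :=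
  fun _ => ⟨isSAntichain_of_mem_chainPolytope, mem_chainPolytope_of_isSAntichain hP⟩
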